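/- arXiv:2505.06828 — 5 statements merged into one kernel-verified Lean document; each statement's English description precedes it below -/
import Mathlib

section
/- In a metric space, for any cycle C = x_1 x_2 ... x_q x_1 on q vertices (with weight w(C) = Σ_i w(x_i, x_{i+1}), indices mod q) contained in a set X, and any finite set Y with |Y| = n, the inequality n·w(C) ≤ 2·Σ_{i=1}^{q} Σ_{y∈Y} w(x_i, y) holds. -/
/-! Each edge `x_i x_{i+1}` of the cycle is bounded by the triangle inequality through every
`y ∈ Y`, giving `n · w(x_i, x_{i+1}) ≤ δ_Y(x_i) + δ_Y(x_{i+1})`. Summing over the cycle, every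
vertex appears in exactly two edges, so the right-hand sides add up to `2 Σ_i δ_Y(x_i)`. -/

open Finset

theorem Finset.sum_range_comp_succ_of_apply_eq_apply_zero {M : Type*} [AddCommMonoid M]
    (f : ℕ → M) {q : ℕ} (hf : f q = f 0) :
    ∑ i ∈ range q, f (i + 1) = ∑ i ∈ range q, f i := by
  cases q with
  | zero => simp
  | succ m => rw [sum_range_succ, hf, sum_range_succ' f m]

section TriangleInequality

variable {V M : Type*} [AddCommMonoid M] [PartialOrder M] [IsOrderedAddMonoid M]
  (w : V → V → M) (hsymm : ∀ a b, w a b = w b a) (htri : ∀ a b c, w a c ≤ w a b + w b c)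
include hsymm htri

theorem card_nsmul_le_sum_add_sum (Y : Finset V) (a b : V) :
    #Y • w a b ≤ ∑ y ∈ Y, w a y + ∑ y ∈ Y, w b y := by
  rw [← sum_const, ← sum_add_distrib]
  exact sum_le_sum fun y _ => (htri a y b).trans_eq (by rw [hsymm y b])

theorem card_nsmul_cycle_weight_le (Y : Finset V) {q : ℕ} (x : ℕ → V) (hx : x q = x 0) :
    #Y • ∑ i ∈ range q, w (x i) (x (i + 1)) ≤ 2 • ∑ i ∈ range q, ∑ y ∈ Y, w (x i) y :=
  calc #Y • ∑ i ∈ range q, w (x i) (x (i + 1))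
      ≤ ∑ i ∈ range q, (∑ y ∈ Y, w (x i) y + ∑ y ∈ Y, w (x (i + 1)) y) := by
        rw [smul_sum]
        exact sum_le_sum fun i _ => card_nsmul_le_sum_add_sum w hsymm htri Y _ _
    _ = 2 • ∑ i ∈ range q, ∑ y ∈ Y, w (x i) y := by
        rw [sum_add_distrib, sum_range_comp_succ_of_apply_eq_apply_zero
          (fun i => ∑ y ∈ Y, w (x i) y) (by simp only [hx]), two_nsmul]

end TriangleInequality

theorem stmt_1_general {V : Type*} (w : V → V → ℝ)
    (hsymm : ∀ a b, w a b = w b a)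
    (htri : ∀ a b c, w a c ≤ w a b + w b c)
    (q : ℕ) (x : ℕ → V) (hper : ∀ j, x (j + q) = x j)
    (Y : Finset V) (n : ℕ) (hY : Y.card = n) :
    (n : ℝ) * ∑ i ∈ Finset.range q, w (x i) (x (i + 1)) ≤
      2 * ∑ i ∈ Finset.range q, ∑ y ∈ Y, w (x i) y := by
  have hx : x q = x 0 := by simpa using hper 0
  have := card_nsmul_cycle_weight_le w hsymm htri Y x hx
  rwa [hY, nsmul_eq_mul, nsmul_eq_mul, Nat.cast_ofNat] at this

/-- For any cycle `C = x_1 ... x_q x_1` (encoded by a `q`-periodic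
vertex map `x : ℕ → V`) with weight `w(C) = Σ_{i<q} w(x_i, x_{i+1})`, and any
finite set `Y` with `|Y| = n`, we have `n·w(C) ≤ 2·Σ_{i<q} Σ_{y∈Y} w(x_i, y)`. -/
theorem stmt_1 {V : Type*} (w : V → V → ℝ)
    (hnn : ∀ a b, 0 ≤ w a b)
    (hsymm : ∀ a b, w a b = w b a)
    (htri : ∀ a b c, w a c ≤ w a b + w b c)
    (q : ℕ) (hq : 1 ≤ q) (x : ℕ → V) (hper : ∀ j, x (j + q) = x j)
    (Y : Finset V) (n : ℕ) (hY : Y.card = n) :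
    (n : ℝ) * ∑ i ∈ Finset.range q, w (x i) (x (i + 1)) ≤
      2 * ∑ i ∈ Finset.range q, ∑ y ∈ Y, w (x i) y :=
  stmt_1_general w hsymm htri q x hper Y n hY
end

section
/- Let C be a cycle on 3k vertices x_0, x_1, ..., x_{3k-1} (indices mod 3k), with edge weights w and vertex costs δ. For r ∈ {0,1,2}, let P_r be the 3-path decomposition obtained by deleting every third edge starting at offset r, i.e., deleting edges {x_{3i+r} x_{3i+r+1} : 0 ≤ i < k}; each P_r consists of k vertex-disjoint 3-paths with total edge weight w(P_r) and terminal cost δ(P_r) = sum of δ over the 2k path endpoints. Then min_{r∈{0,1,2}} ( δ(P_r) + M·w(P_r) ) ≤ (2/3)·Σ_{i} δ(x_i) + (2/3)·M·w(C) for any M ≥ 0. -/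
/-!
Averaging: every vertex is a terminal for two of the three offsets and every edge survives in
two of them, so the three costs sum to three times the right-hand side, and the cheapest offset
costs at most the average.
-/

open Finset

section Offsets

variable {ι M : Type*} [Fintype ι] [AddCommMonoid M]

theorem sum_fin_three_ite_mod_three_ne (a s : ℕ) (x : M) :
    ∑ r : Fin 3, (if a % 3 ≠ ((r : ℕ) + s) % 3 then x else 0) = 2 • x := by
  simp only [Fin.sum_univ_three, Fin.val_zero, Fin.val_one, Fin.val_two, two_nsmul]
  split_ifs <;> first | (exfalso; omega) | simp

theorem sum_fin_three_sum_filter_mod_three_ne (a : ι → ℕ) (s : ℕ) (f : ι → M) :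
    ∑ r : Fin 3, ∑ j ∈ univ.filter (fun j => a j % 3 ≠ ((r : ℕ) + s) % 3), f j
      = 2 • ∑ j, f j := by
  simp only [sum_filter]
  rw [sum_comm, smul_sum]
  exact sum_congr rfl fun j _ => sum_fin_three_ite_mod_three_ne (a j) s (f j)

end Offsets

theorem stmt_4_general (k : ℕ)
    (δ : Fin (3 * k) → ℝ)
    (e : Fin (3 * k) → ℝ)
    (M : ℝ) :
    ∃ r : Fin 3,
      (∑ j ∈ Finset.univ.filter (fun j : Fin (3 * k) => (j : ℕ) % 3 ≠ ((r : ℕ) + 2) % 3), δ j)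
        + M * (∑ i ∈ Finset.univ.filter (fun i : Fin (3 * k) => (i : ℕ) % 3 ≠ (r : ℕ)), e i)
      ≤ (2 / 3) * (∑ j, δ j) + (2 / 3) * M * (∑ i, e i) := by
  have hterminals := sum_fin_three_sum_filter_mod_three_ne (fun j : Fin (3 * k) => (j : ℕ)) 2 δ
  have hedges := sum_fin_three_sum_filter_mod_three_ne (fun i : Fin (3 * k) => (i : ℕ)) 0 e
  simp only [add_zero, Nat.mod_eq_of_lt (Fin.isLt _)] at hedges
  have haverage : ∑ r : Fin 3,
      ((∑ j ∈ univ.filter (fun j : Fin (3 * k) => (j : ℕ) % 3 ≠ ((r : ℕ) + 2) % 3), δ j)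
        + M * (∑ i ∈ univ.filter (fun i : Fin (3 * k) => (i : ℕ) % 3 ≠ (r : ℕ)), e i))
      = ∑ _r : Fin 3, ((2 / 3) * (∑ j, δ j) + (2 / 3) * M * (∑ i, e i)) := by
    rw [sum_add_distrib, hterminals, ← mul_sum, hedges, sum_const, card_univ, Fintype.card_fin]
    simp only [nsmul_eq_mul]
    ring
  obtain ⟨r, -, hr⟩ := exists_le_of_sum_le univ_nonempty haverage.le
  exact ⟨r, hr⟩

/-- Let `C` be a cycle on `3k` vertices `x_0, ..., x_{3k-1}` with
vertex costs `δ j` and edge weights `e i` (edge `i` joins `x_i` and `x_{i+1}`,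
indices mod `3k`). For an offset `r ∈ {0,1,2}` delete the edges with index
`≡ r (mod 3)`; the surviving edges are those with `i % 3 ≠ r` and the terminals
of the resulting 3-paths are the vertices with `j % 3 ≠ r + 2 (mod 3)`.
Then some offset `r` satisfies
`δ(P_r) + M·w(P_r) ≤ (2/3)·Σ_j δ(x_j) + (2/3)·M·w(C)` for any `M ≥ 0`. -/
theorem stmt_4 (k : ℕ) (hk : 1 ≤ k)
    (δ : Fin (3 * k) → ℝ) (hδ : ∀ j, 0 ≤ δ j)
    (e : Fin (3 * k) → ℝ) (he : ∀ i, 0 ≤ e i)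
    (M : ℝ) (hM : 0 ≤ M) :
    ∃ r : Fin 3,
      (∑ j ∈ Finset.univ.filter (fun j : Fin (3 * k) => (j : ℕ) % 3 ≠ ((r : ℕ) + 2) % 3), δ j)
        + M * (∑ i ∈ Finset.univ.filter (fun i : Fin (3 * k) => (i : ℕ) % 3 ≠ (r : ℕ)), e i)
      ≤ (2 / 3) * (∑ j, δ j) + (2 / 3) * M * (∑ i, e i) :=
  stmt_4_general k δ e M
end

section
/- Let x be a point and let C' be a finite family of cycles, each containing x and at most 3 other points, all drawn from a finite set Y' (of size divisible by 3), such that the cycles pairwise share only the point x and together cover Y'. Split C' into the 4-cycles C'₄, 3-cycles C'₃ and 2-cycles C'₂ through x. Then Σ_{y∈Y'} w(x,y) ≤ Σ_{x y₁ y₂ y₃ x ∈ C'₄}( w(x,y₁) + w(x,y₃) ) + (1/2)·w(C'₄) + w(C'₃) + (1/2)·w(C'₂), where w(C'ᵢ) denotes the total edge weight of all cycles in C'ᵢ. -/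
/-!
Each vertex other than `x` contributes `w x y` on the left. For a 4-cycle `x y₁ y₂ y₃ x`, the
middle vertex is reached from `x` along either half of the cycle, so `2 w(x,y₂)` is at most its
weight; for a 3-cycle `x y₁ y₂ x`, the two spokes are part of the cycle; a 2-cycle has weight
exactly `2 w(x,y₁)`.
-/

section CycleBounds

variable {V : Type*} (w : V → V → ℝ)

theorem two_mul_le_four_cycle_weight (hsymm : ∀ a b, w a b = w b a)
    (htri : ∀ a b c, w a c ≤ w a b + w b c) (x a b c : V) :
    2 * w x b ≤ w x a + w a b + w b c + w c x := by
  have hleft := htri x a b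
  have hright := htri x c b
  rw [hsymm c b, hsymm x c] at hright
  linarith

theorem spokes_le_three_cycle_weight (hnn : ∀ a b, 0 ≤ w a b) (hsymm : ∀ a b, w a b = w b a)
    (x a b : V) : w x a + w x b ≤ w x a + w a b + w b x := by
  rw [hsymm x b]
  linarith [hnn a b]

end CycleBounds

theorem stmt_11_general {V : Type*} (w : V → V → ℝ)
    (hnn : ∀ a b, 0 ≤ w a b)
    (hsymm : ∀ a b, w a b = w b a)
    (htri : ∀ a b c, w a c ≤ w a b + w b c)
    (x : V) (Y' : Finset V)
    {I4 I3 I2 : Type*} [Fintype I4] [Fintype I3] [Fintype I2]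
    (F : (I4 × Fin 3) ⊕ (I3 × Fin 2) ⊕ I2 → V)
    (hinj : Function.Injective F)
    (hcover : ∀ v : V, v ∈ Y' ↔ v ∈ Set.range F) :
    ∑ y ∈ Y', w x y ≤
      (∑ c : I4, (w x (F (Sum.inl (c, 0))) + w x (F (Sum.inl (c, 2)))))
      + (1 / 2) * (∑ c : I4,
          (w x (F (Sum.inl (c, 0))) + w (F (Sum.inl (c, 0))) (F (Sum.inl (c, 1)))
            + w (F (Sum.inl (c, 1))) (F (Sum.inl (c, 2))) + w (F (Sum.inl (c, 2))) x))
      + (∑ c : I3,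
          (w x (F (Sum.inr (Sum.inl (c, 0)))) +
            w (F (Sum.inr (Sum.inl (c, 0)))) (F (Sum.inr (Sum.inl (c, 1)))) +
            w (F (Sum.inr (Sum.inl (c, 1)))) x))
      + (1 / 2) * (∑ c : I2, 2 * w x (F (Sum.inr (Sum.inr c)))) := by
  have hY' : Y' = Finset.univ.map ⟨F, hinj⟩ := by
    ext v
    simp [hcover]
  rw [hY', Finset.sum_map, Function.Embedding.coeFn_mk, Fintype.sum_sum_type,
    Fintype.sum_sum_type, Fintype.sum_prod_type, Fintype.sum_prod_type]
  have h4 := Finset.sum_le_sum fun c (_ : c ∈ (Finset.univ : Finset I4)) =>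
    two_mul_le_four_cycle_weight w hsymm htri x (F (Sum.inl (c, 0))) (F (Sum.inl (c, 1)))
      (F (Sum.inl (c, 2)))
  have h3 := Finset.sum_le_sum fun c (_ : c ∈ (Finset.univ : Finset I3)) =>
    spokes_le_three_cycle_weight w hnn hsymm x (F (Sum.inr (Sum.inl (c, 0))))
      (F (Sum.inr (Sum.inl (c, 1))))
  simp only [Fin.sum_univ_three, Fin.sum_univ_two, Finset.sum_add_distrib, ← Finset.mul_sum]
    at h4 h3 ⊢
  linarith

/-- Let `x` be a point and let a family of cycles through `x`
(4-cycles indexed by `I4`, 3-cycles by `I3`, 2-cycles by `I2`), pairwise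
sharing only `x`, cover a finite set `Y'` (of size divisible by 3) not
containing `x`; the vertices other than `x` are encoded by the injective map
`F` with range `Y'`. Then
`Σ_{y∈Y'} w(x,y) ≤ Σ_{4-cycles}(w(x,y₁)+w(x,y₃)) + (1/2)·w(C'₄) + w(C'₃) + (1/2)·w(C'₂)`. -/
theorem stmt_11 {V : Type*} (w : V → V → ℝ)
    (hnn : ∀ a b, 0 ≤ w a b)
    (hsymm : ∀ a b, w a b = w b a)
    (htri : ∀ a b c, w a c ≤ w a b + w b c)
    (x : V) (Y' : Finset V) (hx : x ∉ Y') (h3 : 3 ∣ Y'.card)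
    {I4 I3 I2 : Type*} [Fintype I4] [Fintype I3] [Fintype I2]
    (F : (I4 × Fin 3) ⊕ (I3 × Fin 2) ⊕ I2 → V)
    (hinj : Function.Injective F)
    (hcover : ∀ v : V, v ∈ Y' ↔ v ∈ Set.range F) :
    ∑ y ∈ Y', w x y ≤
      (∑ c : I4, (w x (F (Sum.inl (c, 0))) + w x (F (Sum.inl (c, 2)))))
      + (1 / 2) * (∑ c : I4,
          (w x (F (Sum.inl (c, 0))) + w (F (Sum.inl (c, 0))) (F (Sum.inl (c, 1)))
            + w (F (Sum.inl (c, 1))) (F (Sum.inl (c, 2))) + w (F (Sum.inl (c, 2))) x))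
      + (∑ c : I3,
          (w x (F (Sum.inr (Sum.inl (c, 0)))) +
            w (F (Sum.inr (Sum.inl (c, 0)))) (F (Sum.inr (Sum.inl (c, 1)))) +
            w (F (Sum.inr (Sum.inl (c, 1)))) x))
      + (1 / 2) * (∑ c : I2, 2 * w x (F (Sum.inr (Sum.inr c)))) :=
  stmt_11_general w hnn hsymm htri x Y' F hinj hcover
end

section
/- With the setup of the previous statement (a family C' = C'₄ ∪ C'₃ ∪ C'₂ of cycles through x covering Y', |Y'| divisible by 3), define W = Σ_{x y₁ y₂ y₃ x ∈ C'₄} ( w(y₁,y₂) + w(y₂,y₃) + w(y₃,y₁) ) + w(C'₃) + w(C'₂) (the weight of the cycle packing in Y' obtained from C' by shortcutting x). Then δ_{Y'}(x) + (1/2)·W ≤ (3/2)·w(C'), where δ_{Y'}(x) = Σ_{y∈Y'} w(x,y). -/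
/-! Every vertex of `Y'` lies on exactly one cycle of `C'`, so `δ_{Y'}(x)` splits into the edges
from `x` to the vertices of each cycle and the inequality can be checked cycle by cycle. For a
4-cycle `x y₁ y₂ y₃ x` the edge `x y₂` is bounded by half of each way around the cycle and the
shortcut edge `y₃ y₁` by the path `y₃ y₂ y₁`; in 2- and 3-cycles the edges from `x` are
already edges of the cycle. -/

open Finset

theorem Finset.sum_eq_sum_of_injective_of_mem_iff {V ι M : Type*} [Fintype ι] [AddCommMonoid M]
    (F : ι → V) (hinj : Function.Injective F) (s : Finset V)
    (hs : ∀ v : V, v ∈ s ↔ v ∈ Set.range F) (g : V → M) :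
    ∑ v ∈ s, g v = ∑ i, g (F i) := by
  classical
  have hs_eq : s = univ.image F := by
    ext v
    simp [hs]
  rw [hs_eq, sum_image hinj.injOn]

theorem Finset.sum_add_half_sum_le_of_forall {ι : Type*} (s : Finset ι) (a b c : ι → ℝ)
    (h : ∀ i ∈ s, a i + 1 / 2 * b i ≤ 3 / 2 * c i) :
    ∑ i ∈ s, a i + 1 / 2 * ∑ i ∈ s, b i ≤ 3 / 2 * ∑ i ∈ s, c i := by
  rw [mul_sum, mul_sum, ← sum_add_distrib]
  exact sum_le_sum h

section CycleBounds

variable {V : Type*} (w : V → V → ℝ)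

theorem cycle4_spokes_add_half_shortcut_le (hsymm : ∀ a b, w a b = w b a)
    (htri : ∀ a b c, w a c ≤ w a b + w b c) (x y₁ y₂ y₃ : V) :
    (w x y₁ + w x y₂ + w x y₃) + 1 / 2 * (w y₁ y₂ + w y₂ y₃ + w y₃ y₁) ≤
      3 / 2 * (w x y₁ + w y₁ y₂ + w y₂ y₃ + w y₃ x) := by
  have h_left : w x y₂ ≤ w x y₁ + w y₁ y₂ := htri x y₁ y₂
  have h_right : w x y₂ ≤ w x y₃ + w y₃ y₂ := htri x y₃ y₂
  have h_shortcut : w y₃ y₁ ≤ w y₃ y₂ + w y₂ y₁ := htri y₃ y₂ y₁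
  linarith [hsymm x y₃, hsymm y₃ y₂, hsymm y₂ y₁]

theorem cycle3_spokes_add_half_le (hnn : ∀ a b, 0 ≤ w a b) (hsymm : ∀ a b, w a b = w b a)
    (x y₁ y₂ : V) :
    (w x y₁ + w x y₂) + 1 / 2 * (w x y₁ + w y₁ y₂ + w y₂ x) ≤
      3 / 2 * (w x y₁ + w y₁ y₂ + w y₂ x) := by
  linarith [hnn y₁ y₂, hsymm x y₂]

theorem cycle2_spoke_add_half_le (hnn : ∀ a b, 0 ≤ w a b) (x y : V) :
    w x y + 1 / 2 * (2 * w x y) ≤ 3 / 2 * (2 * w x y) := by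
  linarith [hnn x y]

end CycleBounds

theorem stmt_12_general {V : Type*} (w : V → V → ℝ)
    (hnn : ∀ a b, 0 ≤ w a b)
    (hsymm : ∀ a b, w a b = w b a)
    (htri : ∀ a b c, w a c ≤ w a b + w b c)
    (x : V) (Y' : Finset V)
    {I4 I3 I2 : Type*} [Fintype I4] [Fintype I3] [Fintype I2]
    (F : (I4 × Fin 3) ⊕ (I3 × Fin 2) ⊕ I2 → V)
    (hinj : Function.Injective F)
    (hcover : ∀ v : V, v ∈ Y' ↔ v ∈ Set.range F) :
    (∑ y ∈ Y', w x y)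
      + (1 / 2) * ((∑ c : I4,
            (w (F (Sum.inl (c, 0))) (F (Sum.inl (c, 1)))
              + w (F (Sum.inl (c, 1))) (F (Sum.inl (c, 2)))
              + w (F (Sum.inl (c, 2))) (F (Sum.inl (c, 0)))))
          + (∑ c : I3,
              (w x (F (Sum.inr (Sum.inl (c, 0)))) +
                w (F (Sum.inr (Sum.inl (c, 0)))) (F (Sum.inr (Sum.inl (c, 1)))) +
                w (F (Sum.inr (Sum.inl (c, 1)))) x))
          + (∑ c : I2, 2 * w x (F (Sum.inr (Sum.inr c))))) ≤
      (3 / 2) * ((∑ c : I4,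
            (w x (F (Sum.inl (c, 0))) + w (F (Sum.inl (c, 0))) (F (Sum.inl (c, 1)))
              + w (F (Sum.inl (c, 1))) (F (Sum.inl (c, 2))) + w (F (Sum.inl (c, 2))) x))
          + (∑ c : I3,
              (w x (F (Sum.inr (Sum.inl (c, 0)))) +
                w (F (Sum.inr (Sum.inl (c, 0)))) (F (Sum.inr (Sum.inl (c, 1)))) +
                w (F (Sum.inr (Sum.inl (c, 1)))) x))
          + (∑ c : I2, 2 * w x (F (Sum.inr (Sum.inr c))))) := by
  rw [sum_eq_sum_of_injective_of_mem_iff F hinj Y' hcover, Fintype.sum_sum_type,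
    Fintype.sum_sum_type, Fintype.sum_prod_type, Fintype.sum_prod_type]
  simp only [Fin.sum_univ_three, Fin.sum_univ_two]
  have h4 := sum_add_half_sum_le_of_forall univ _ _ _ fun c _ =>
    cycle4_spokes_add_half_shortcut_le w hsymm htri x
      (F (Sum.inl (c, 0))) (F (Sum.inl (c, 1))) (F (Sum.inl (c, 2)))
  have h3 := sum_add_half_sum_le_of_forall univ _ _ _ fun c _ =>
    cycle3_spokes_add_half_le w hnn hsymm x
      (F (Sum.inr (Sum.inl (c, 0)))) (F (Sum.inr (Sum.inl (c, 1))))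
  have h2 := sum_add_half_sum_le_of_forall univ _ _ _ fun c _ =>
    cycle2_spoke_add_half_le w hnn x (F (Sum.inr (Sum.inr c)))
  linarith

/-- With the setup of Statement 11 (a family `C' = C'₄ ∪ C'₃ ∪ C'₂`
of cycles through `x`, pairwise sharing only `x` and covering `Y'` of size
divisible by 3), let `W` be the weight of the cycle packing of `Y'` obtained by
shortcutting `x` (triangles `y₁y₂y₃y₁` from the 4-cycles, plus `w(C'₃)+w(C'₂)`).
Then `δ_{Y'}(x) + (1/2)·W ≤ (3/2)·w(C')`. -/
theorem stmt_12 {V : Type*} (w : V → V → ℝ)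
    (hnn : ∀ a b, 0 ≤ w a b)
    (hsymm : ∀ a b, w a b = w b a)
    (htri : ∀ a b c, w a c ≤ w a b + w b c)
    (x : V) (Y' : Finset V) (hx : x ∉ Y') (h3 : 3 ∣ Y'.card)
    {I4 I3 I2 : Type*} [Fintype I4] [Fintype I3] [Fintype I2]
    (F : (I4 × Fin 3) ⊕ (I3 × Fin 2) ⊕ I2 → V)
    (hinj : Function.Injective F)
    (hcover : ∀ v : V, v ∈ Y' ↔ v ∈ Set.range F) :
    (∑ y ∈ Y', w x y)
      + (1 / 2) * ((∑ c : I4,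
            (w (F (Sum.inl (c, 0))) (F (Sum.inl (c, 1)))
              + w (F (Sum.inl (c, 1))) (F (Sum.inl (c, 2)))
              + w (F (Sum.inl (c, 2))) (F (Sum.inl (c, 0)))))
          + (∑ c : I3,
              (w x (F (Sum.inr (Sum.inl (c, 0)))) +
                w (F (Sum.inr (Sum.inl (c, 0)))) (F (Sum.inr (Sum.inl (c, 1)))) +
                w (F (Sum.inr (Sum.inl (c, 1)))) x))
          + (∑ c : I2, 2 * w x (F (Sum.inr (Sum.inr c))))) ≤
      (3 / 2) * ((∑ c : I4,
            (w x (F (Sum.inl (c, 0))) + w (F (Sum.inl (c, 0))) (F (Sum.inl (c, 1)))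
              + w (F (Sum.inl (c, 1))) (F (Sum.inl (c, 2))) + w (F (Sum.inl (c, 2))) x))
          + (∑ c : I3,
              (w x (F (Sum.inr (Sum.inl (c, 0)))) +
                w (F (Sum.inr (Sum.inl (c, 0)))) (F (Sum.inr (Sum.inl (c, 1)))) +
                w (F (Sum.inr (Sum.inl (c, 1)))) x))
          + (∑ c : I2, 2 * w x (F (Sum.inr (Sum.inr c))))) :=
  stmt_12_general w hnn hsymm htri x Y' F hinj hcover
end

section
/- In the schedule pattern of a normal super-game between super-teams of 3d teams each, where team s_{3i+i'} plays away against t_{3j+j'} on day (6(i+j)+i'+j') mod 6d and home on day (6(i+j)+i'+j'+3) mod 6d (0 ≤ i,j ≤ d−1, 0 ≤ i',j' ≤ 2), every team plays exactly one game on each of the 6d days, each pair (s, t) meets exactly twice (once at each venue), no pair plays on two consecutive days, and no team has more than 3 consecutive home games or 3 consecutive away games within the 6d days. -/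
/-- Day (in `ℤ/6dℤ`) on which team `s_a` plays away against `t_b` in a normal
super-game: `(6(⌊a/3⌋+⌊b/3⌋) + a%3 + b%3) mod 6d`. -/
def awayDay (d : ℕ) (a b : Fin (3 * d)) : ZMod (6 * d) :=
  ((6 * ((a : ℕ) / 3 + (b : ℕ) / 3) + (a : ℕ) % 3 + (b : ℕ) % 3 : ℕ) : ZMod (6 * d))

/-- Day on which team `s_a` plays at home against `t_b`: three days later mod `6d`. -/
def homeDay (d : ℕ) (a b : Fin (3 * d)) : ZMod (6 * d) :=
  awayDay d a b + 3

/-!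
Modulo 6, the away game of `s_a` against `t_b` falls on the residue `a % 3 + b % 3` and the
home game on `a % 3 + b % 3 + 3`. So the two games of a pair are three days apart, and the away
(or home) days of a fixed team lie in a window of three consecutive residues, which contains no
two days three apart. For one game per day, the day of `s_a` against `t_b` is a shift, depending
only on `a`, of `6 ⌊b/3⌋ + b % 3 (+ 3 at home)`, which maps the `6d` pairs (opponent, venue)
injectively into `[0, 6d)`.
-/

section

variable {d : ℕ}

abbrev modSix (d : ℕ) : ZMod (6 * d) →+* ZMod 6 :=
  ZMod.castHom (dvd_mul_right 6 d) (ZMod 6)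

theorem awayDay_comm (a b : Fin (3 * d)) : awayDay d a b = awayDay d b a := by
  unfold awayDay
  congr 1
  omega

theorem homeDay_comm (a b : Fin (3 * d)) : homeDay d a b = homeDay d b a := by
  rw [homeDay, homeDay, awayDay_comm]

theorem modSix_awayDay (a b : Fin (3 * d)) :
    modSix d (awayDay d a b) = (((a : ℕ) % 3 : ℕ) : ZMod 6) + (((b : ℕ) % 3 : ℕ) : ZMod 6) := by
  have h6 : (6 : ZMod 6) = 0 := rfl
  simp only [awayDay, map_natCast]
  push_cast
  rw [h6]
  ring

theorem modSix_homeDay (a b : Fin (3 * d)) :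
    modSix d (homeDay d a b) =
      (((a : ℕ) % 3 : ℕ) : ZMod 6) + (((b : ℕ) % 3 : ℕ) : ZMod 6) + 3 := by
  rw [homeDay, map_add, modSix_awayDay, map_ofNat]

theorem homeDay_ne_awayDay_add_one (a b : Fin (3 * d)) : homeDay d a b ≠ awayDay d a b + 1 := by
  intro h
  have h31 := congrArg (modSix d) (add_left_cancel (h : awayDay d a b + 3 = _))
  rw [map_ofNat, map_one] at h31
  exact absurd h31 (by decide)

theorem awayDay_ne_homeDay_add_one (a b : Fin (3 * d)) : awayDay d a b ≠ homeDay d a b + 1 := by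
  intro h
  rw [homeDay, add_assoc] at h
  have h04 := congrArg (modSix d) (left_eq_add.mp h)
  rw [map_zero, map_add, map_ofNat, map_one] at h04
  exact absurd h04 (by decide)

/-- For `p = (b, away?)`: the day of the game of `s_a` against `t_b` at that venue, counted from
the day `6 ⌊a/3⌋ + a % 3`. -/
def dayOffset (p : Fin (3 * d) × Bool) : ℕ :=
  6 * ((p.1 : ℕ) / 3) + (p.1 : ℕ) % 3 + if p.2 then 0 else 3

theorem dayOffset_lt (p : Fin (3 * d) × Bool) : dayOffset p < 6 * d := by
  have := p.1.isLt
  unfold dayOffset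
  split <;> omega

theorem dayOffset_injective : Function.Injective (dayOffset (d := d)) := by
  rintro ⟨b, v⟩ ⟨b', v'⟩ h
  have h' : (b : ℕ) = b' ∧ v = v' := by
    cases v <;> cases v' <;> simp [dayOffset] at h ⊢ <;> omega
  exact Prod.ext (Fin.ext h'.1) h'.2

theorem schedule_eq_add_dayOffset (a : Fin (3 * d)) (p : Fin (3 * d) × Bool) :
    (if p.2 then awayDay d a p.1 else homeDay d a p.1) =
      ((6 * ((a : ℕ) / 3) + (a : ℕ) % 3 : ℕ) : ZMod (6 * d)) + (dayOffset p : ZMod (6 * d)) := by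
  rcases p with ⟨b, _ | _⟩ <;> simp only [homeDay, awayDay, dayOffset] <;> push_cast <;> ring

theorem bijective_schedule (hd : 1 ≤ d) (a : Fin (3 * d)) :
    Function.Bijective (fun p : Fin (3 * d) × Bool =>
      if p.2 then awayDay d a p.1 else homeDay d a p.1) := by
  have : NeZero (6 * d) := ⟨by omega⟩
  refine (Fintype.bijective_iff_injective_and_card _).mpr ⟨fun p q h => ?_, ?_⟩
  · simp only [schedule_eq_add_dayOffset, add_right_inj] at h
    apply dayOffset_injective
    simpa [ZMod.val_cast_of_lt (dayOffset_lt _)] using congrArg ZMod.val h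
  · simp only [Fintype.card_prod, Fintype.card_fin, Fintype.card_bool, ZMod.card]
    ring

theorem not_forall_exists_eq_add_of_modSix {X : Type*} (g : X → ZMod (6 * d)) (c : ZMod 6)
    (hg : ∀ x, ∃ i : ℕ, i < 3 ∧ modSix d (g x) = c + i) (D : ZMod (6 * d)) :
    ¬ ∀ k : Fin 4, ∃ x, g x = D + ((k : ℕ) : ZMod (6 * d)) := by
  intro h
  obtain ⟨x₀, hx₀⟩ := h 0
  obtain ⟨x₃, hx₃⟩ := h 3
  obtain ⟨i, hi, hgi⟩ := hg x₀
  obtain ⟨j, hj, hgj⟩ := hg x₃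
  have hD₀ : modSix d D = c + i := by simpa [hgi] using (congrArg (modSix d) hx₀).symm
  have hD₃ : modSix d D + 3 = c + j := by
    rw [← hgj, hx₃, map_add, map_natCast]
    rfl
  have hij : (i : ZMod 6) + 3 = j := by
    rw [hD₀, add_assoc] at hD₃
    exact add_left_cancel hD₃
  interval_cases i <;> interval_cases j <;> exact absurd hij (by decide)

theorem not_forall_exists_awayDay_eq_add (a : Fin (3 * d)) (D : ZMod (6 * d)) :
    ¬ ∀ k : Fin 4, ∃ b, awayDay d a b = D + ((k : ℕ) : ZMod (6 * d)) :=
  not_forall_exists_eq_add_of_modSix _ _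
    (fun b : Fin (3 * d) => ⟨(b : ℕ) % 3, Nat.mod_lt _ three_pos, modSix_awayDay a b⟩) D

theorem not_forall_exists_homeDay_eq_add (a : Fin (3 * d)) (D : ZMod (6 * d)) :
    ¬ ∀ k : Fin 4, ∃ b, homeDay d a b = D + ((k : ℕ) : ZMod (6 * d)) :=
  not_forall_exists_eq_add_of_modSix _ ((((a : ℕ) % 3 : ℕ) : ZMod 6) + 3)
    (fun b : Fin (3 * d) => ⟨(b : ℕ) % 3, Nat.mod_lt _ three_pos, by rw [modSix_homeDay]; ring⟩) D

end

/-- In the normal super-game schedule between `S = {s_0,...,s_{3d−1}}`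
and `T = {t_0,...,t_{3d−1}}` on days `0,...,6d−1`: (1) every `s`-team plays
exactly one game per day (the map (opponent, venue) ↦ day is a bijection onto
the `6d` days, so each pair meets exactly once at each venue); (2) likewise for
every `t`-team; (3) no pair plays on two consecutive days; (4) no `s`-team and
no `t`-team has 4 consecutive home days or 4 consecutive away days (bounded-by-3). -/
theorem stmt_14 (d : ℕ) (hd : 1 ≤ d) :
    (∀ a : Fin (3 * d),
      Function.Bijective (fun p : Fin (3 * d) × Bool =>
        if p.2 then awayDay d a p.1 else homeDay d a p.1)) ∧
    (∀ b : Fin (3 * d),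
      Function.Bijective (fun p : Fin (3 * d) × Bool =>
        if p.2 then awayDay d p.1 b else homeDay d p.1 b)) ∧
    (∀ a b : Fin (3 * d),
      homeDay d a b ≠ awayDay d a b + 1 ∧ awayDay d a b ≠ homeDay d a b + 1) ∧
    (∀ a : Fin (3 * d), ∀ D : ZMod (6 * d),
      ¬ (∀ k : Fin 4, ∃ b, homeDay d a b = D + ((k : ℕ) : ZMod (6 * d)))) ∧
    (∀ a : Fin (3 * d), ∀ D : ZMod (6 * d),
      ¬ (∀ k : Fin 4, ∃ b, awayDay d a b = D + ((k : ℕ) : ZMod (6 * d)))) ∧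
    (∀ b : Fin (3 * d), ∀ D : ZMod (6 * d),
      ¬ (∀ k : Fin 4, ∃ a, awayDay d a b = D + ((k : ℕ) : ZMod (6 * d)))) ∧
    (∀ b : Fin (3 * d), ∀ D : ZMod (6 * d),
      ¬ (∀ k : Fin 4, ∃ a, homeDay d a b = D + ((k : ℕ) : ZMod (6 * d)))) := by
  refine ⟨bijective_schedule hd, fun b => ?_,
    fun a b => ⟨homeDay_ne_awayDay_add_one a b, awayDay_ne_homeDay_add_one a b⟩,
    not_forall_exists_homeDay_eq_add, not_forall_exists_awayDay_eq_add, fun b => ?_, fun b => ?_⟩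
  · simpa only [awayDay_comm _ b, homeDay_comm _ b] using bijective_schedule hd b
  · simpa only [awayDay_comm _ b] using not_forall_exists_awayDay_eq_add b
  · simpa only [homeDay_comm _ b] using not_forall_exists_homeDay_eq_add b
end
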